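/- Determinant formula for the integral 2-inner product: for real-valued functions f, g, h with φ·f², φ·g², φ·h² integrable on a measure space (Ω, Σ, μ) and φ : Ω → [0,∞) measurable, one has (1/2)∫∫ φ(x)φ(y)·det[[f(x),f(y)],[h(x),h(y)]]·det[[g(x),g(y)],[h(x),h(y)]] dμ(x)dμ(y) = det[[∫φfg dμ, ∫φfh dμ],[∫φgh dμ, ∫φh² dμ]]. -/

import Mathlib

/-! Expanding the product of the two determinants writes the integrand as a sum of four
separated terms `a(x) b(y)`; the iterated integral of each is `(∫ a) (∫ b)`, and the four
products pair off into twice the Gram determinant. Integrability of the mixed weights `φ u v`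
comes from `2 |u v| ≤ u² + v²`. -/

open MeasureTheory

section

variable {Ω : Type*} [MeasurableSpace Ω]

theorem integrable_weight_mul_mul {μ : Measure Ω} {φ u v : Ω → ℝ} (hφ : ∀ x, 0 ≤ φ x)
    (hm : AEStronglyMeasurable (fun x => φ x * (u x * v x)) μ)
    (hu : Integrable (fun x => φ x * u x ^ 2) μ) (hv : Integrable (fun x => φ x * v x ^ 2) μ) :
    Integrable (fun x => φ x * (u x * v x)) μ := by
  refine ((hu.add hv).const_mul (1 / 2)).mono' hm (.of_forall fun x => ?_)
  have amgm : 2 * |u x| * |v x| ≤ u x ^ 2 + v x ^ 2 := by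
    simpa only [sq_abs] using two_mul_le_add_sq |u x| |v x|
  rw [Real.norm_eq_abs, abs_mul, abs_of_nonneg (hφ x), abs_mul, Pi.add_apply]
  nlinarith [mul_le_mul_of_nonneg_left amgm (hφ x)]

theorem integral_integral_sum_mul {ι : Type*} {μ ν : Measure Ω} (s : Finset ι)
    (a b : ι → Ω → ℝ) (ha : ∀ i ∈ s, Integrable (a i) μ) (hb : ∀ i ∈ s, Integrable (b i) ν) :
    ∫ x, ∫ y, ∑ i ∈ s, a i x * b i y ∂ν ∂μ = ∑ i ∈ s, (∫ x, a i x ∂μ) * ∫ y, b i y ∂ν := by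
  have inner : ∀ x, ∫ y, ∑ i ∈ s, a i x * b i y ∂ν = ∑ i ∈ s, a i x * ∫ y, b i y ∂ν := by
    intro x
    rw [integral_finsetSum s fun i hi => (hb i hi).const_mul (a i x)]
    simp only [integral_const_mul]
  simp_rw [inner]
  rw [integral_finsetSum s fun i hi => (ha i hi).mul_const _]
  simp only [integral_mul_const]

end

theorem stmt {Ω : Type} [MeasurableSpace Ω] (μ : Measure Ω)
    (φ f g h : Ω → ℝ) (hφm : Measurable φ) (hφ : ∀ x, 0 ≤ φ x)
    (hf : Measurable f) (hg : Measurable g) (hh : Measurable h)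
    (hf2 : Integrable (fun x => φ x * f x ^ 2) μ)
    (hg2 : Integrable (fun x => φ x * g x ^ 2) μ)
    (hh2 : Integrable (fun x => φ x * h x ^ 2) μ) :
    (1/2) * ∫ x, (∫ y, φ x * φ y * ((f x * h y - f y * h x) * (g x * h y - g y * h x)) ∂μ) ∂μ
      = (∫ x, φ x * (f x * g x) ∂μ) * (∫ x, φ x * h x ^ 2 ∂μ)
        - (∫ x, φ x * (f x * h x) ∂μ) * (∫ x, φ x * (g x * h x) ∂μ) := by
  have hfg := integrable_weight_mul_mul hφ (hφm.mul (hf.mul hg)).aestronglyMeasurable hf2 hg2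
  have hfh := integrable_weight_mul_mul hφ (hφm.mul (hf.mul hh)).aestronglyMeasurable hf2 hh2
  have hgh := integrable_weight_mul_mul hφ (hφm.mul (hg.mul hh)).aestronglyMeasurable hg2 hh2
  let a : Fin 4 → Ω → ℝ := ![fun x => φ x * (f x * g x), fun x => φ x * (f x * h x),
    fun x => φ x * (g x * h x), fun x => φ x * h x ^ 2]
  let b : Fin 4 → Ω → ℝ := ![fun y => φ y * h y ^ 2, fun y => -(φ y * (g y * h y)),
    fun y => -(φ y * (f y * h y)), fun y => φ y * (f y * g y)]
  have expand : ∀ x y, φ x * φ y * ((f x * h y - f y * h x) * (g x * h y - g y * h x))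
      = ∑ i, a i x * b i y := by
    intro x y
    simp only [Fin.sum_univ_four, a, b, Matrix.cons_val]
    ring
  have ha : ∀ i ∈ Finset.univ, Integrable (a i) μ := by
    intro i _; fin_cases i
    exacts [hfg, hfh, hgh, hh2]
  have hb : ∀ i ∈ Finset.univ, Integrable (b i) μ := by
    intro i _; fin_cases i
    exacts [hh2, hgh.neg, hfh.neg, hfg]
  simp_rw [expand]
  rw [integral_integral_sum_mul _ a b ha hb]
  simp only [Fin.sum_univ_four, a, b, Matrix.cons_val, integral_neg]
  ring
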